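/- arXiv:2008.03292 — 2 statements merged into one kernel-verified Lean document; each statement's English description precedes it below -/
import Mathlib

section
/- For fixed i ∈ [n−1], the indicator statistic of whether i and n lie in the same cycle of w is (1/2)-mesic with respect to the action of φ̄ = I ∘ F^{-1} ∘ R ∘ F on S_n (for n ≥ 2). -/
/-- The cycle of `w` containing `x`, listed starting at `x`:
`[x, w x, w² x, …]` with each element appearing once. -/
def cyc {n : ℕ} (w : Equiv.Perm (Fin n)) (x : Fin n) : List (Fin n) :=
  (List.range n).foldl (fun acc k => if (w ^ k) x ∈ acc then acc else acc ++ [(w ^ k) x]) []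

/-- The Rényi–Foata word of `w`: write the canonical cycle decomposition
(each cycle starting with its largest element, cycles listed in increasing
order of largest elements) and drop the parentheses. -/
def foataWord {n : ℕ} (w : Equiv.Perm (Fin n)) : List (Fin n) :=
  ((List.finRange n).filter (fun x => decide (∀ y ∈ cyc w x, y ≤ x))).flatMap (cyc w)

/-- The Rényi–Foata map, as a function `Fin n → Fin n` reading off the word. -/
def foataFun {n : ℕ} (w : Equiv.Perm (Fin n)) : Fin n → Fin n :=
  fun i => (foataWord w).getD i.val ⟨0, i.pos⟩

/-- One-line notation of a permutation, as a list of values in `Fin n`. -/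
def oneLineF {n : ℕ} (w : Equiv.Perm (Fin n)) : List (Fin n) :=
  (List.finRange n).map w

/-- One-line notation with natural-number entries (0-indexed values). -/
def oneLineN {n : ℕ} (w : Equiv.Perm (Fin n)) : List ℕ :=
  (List.finRange n).map fun i => (w i : ℕ)

/-- The Rényi–Foata word with natural-number entries. -/
def wordN {n : ℕ} (w : Equiv.Perm (Fin n)) : List ℕ :=
  (foataWord w).map Fin.val

/-- `i` is a record (left-to-right maximum) position of the word `L`. -/
def recB (L : List ℕ) (i : ℕ) : Bool :=
  decide (i < L.length ∧ ∀ j < i, L.getD j 0 < L.getD i 0)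

/-- Number of records (left-to-right maxima) of the word `L`. -/
def recordCount (L : List ℕ) : ℕ :=
  ((List.range L.length).filter (recB L)).length

/-- Number of fixed points (1-cycles) of `w`. -/
def fixCount {n : ℕ} (w : Equiv.Perm (Fin n)) : ℕ :=
  (Finset.univ.filter fun i : Fin n => w i = i).card

/-- `IsPhi w w'` says that `w' = φ(w)` where `φ = F ∘ I ∘ F⁻¹ ∘ R`:
first reverse the one-line notation of `w`, then apply `F⁻¹` (giving the
unique `u` whose Foata word is that reversal), invert `u`, and apply `F`. -/
def IsPhi {n : ℕ} (w w' : Equiv.Perm (Fin n)) : Prop :=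
  ∃ u : Equiv.Perm (Fin n),
    foataWord u = (oneLineF w).reverse ∧ oneLineF w' = foataWord u⁻¹

/-- `IsPhiBar w w'` says that `w' = φ̄(w)` where `φ̄ = I ∘ F⁻¹ ∘ R ∘ F`:
apply `F` to `w`, reverse the resulting word, apply `F⁻¹`, and invert. -/
def IsPhiBar {n : ℕ} (w w' : Equiv.Perm (Fin n)) : Prop :=
  foataWord w'⁻¹ = (foataWord w).reverse

/-- `IsGamma w w'` says that `w' = γ(w)` where `γ = I ∘ F⁻¹ ∘ C ∘ F`:
apply `F` to `w`, complement each entry of the resulting word, apply `F⁻¹`,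
and invert. -/
def IsGamma {n : ℕ} (w w' : Equiv.Perm (Fin n)) : Prop :=
  foataWord w'⁻¹ = (foataWord w).map Fin.rev

/-! In the Rényi–Foata word of a permutation of `[n]` the cycle of `n` is written last,
starting with `n`, so the letters after `n` are exactly the other elements of its cycle.
Reversing the word exchanges the letters before and after `n`, and inversion keeps the cycles,
so `φ̄` flips the indicator of `i ~ n`. Along an orbit the indicator therefore alternates: the
orbit has even length and the indicator is `1` on exactly half of it. -/

section AppendIfNew

variable {α β : Type*} [DecidableEq β]

def appendIfNew (g : α → β) (acc : List β) (a : α) : List β :=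
  if g a ∈ acc then acc else acc ++ [g a]

variable (g : α → β)

lemma mem_foldl_appendIfNew (l : List α) (acc : List β) (b : β) :
    b ∈ l.foldl (appendIfNew g) acc ↔ b ∈ acc ∨ ∃ a ∈ l, g a = b := by
  induction l generalizing acc with
  | nil => simp
  | cons a l ih =>
    rw [List.foldl_cons, ih]
    by_cases h : g a ∈ acc <;> simp only [appendIfNew, h, if_true, if_false] <;> aesop

lemma nodup_foldl_appendIfNew (l : List α) {acc : List β} (hacc : acc.Nodup) :
    (l.foldl (appendIfNew g) acc).Nodup := by
  induction l generalizing acc with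
  | nil => exact hacc
  | cons a l ih =>
    refine ih ?_
    by_cases h : g a ∈ acc
    · simpa [appendIfNew, h] using hacc
    · simpa [appendIfNew, h, ← List.concat_eq_append] using hacc.concat h

lemma prefix_foldl_appendIfNew (l : List α) (acc : List β) :
    acc <+: l.foldl (appendIfNew g) acc := by
  induction l generalizing acc with
  | nil => exact List.prefix_refl acc
  | cons a l ih =>
    refine List.IsPrefix.trans ?_ (ih _)
    by_cases h : g a ∈ acc <;> simp [appendIfNew, h]

end AppendIfNew

section FoataWord

open Equiv

lemma cyc_eq_foldl_appendIfNew {n : ℕ} (w : Perm (Fin n)) (x : Fin n) :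
    cyc w x = (List.range n).foldl (appendIfNew fun k => (w ^ k) x) [] :=
  rfl

lemma mem_cyc_iff_sameCycle {n : ℕ} (w : Perm (Fin n)) (x y : Fin n) :
    y ∈ cyc w x ↔ w.SameCycle x y := by
  rw [cyc_eq_foldl_appendIfNew, mem_foldl_appendIfNew]
  constructor
  · rintro (h | ⟨k, -, rfl⟩)
    · simp at h
    · exact ⟨k, zpow_natCast w k ▸ rfl⟩
  · intro h
    refine Or.inr ?_
    by_cases hx : w x = x
    · obtain ⟨j, rfl⟩ := h
      exact ⟨0, by simpa using x.pos, by simp [Perm.zpow_apply_eq_self_of_apply_eq_self hx]⟩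
    · obtain ⟨k, hk, hky⟩ := h.exists_pow_eq_of_mem_support (Perm.mem_support.2 hx)
      have : (w.cycleOf x).support.card ≤ n := by
        simpa using Finset.card_le_univ (w.cycleOf x).support
      exact ⟨k, List.mem_range.2 (by omega), hky⟩

lemma cyc_eq_cons {n : ℕ} (w : Perm (Fin n)) (x : Fin n) :
    ∃ T, cyc w x = x :: T ∧ x ∉ T := by
  obtain ⟨m, rfl⟩ : ∃ m, n = m + 1 := Nat.exists_eq_add_one_of_ne_zero x.pos.ne'
  obtain ⟨T, hT⟩ := prefix_foldl_appendIfNew (fun k => (w ^ k) x)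
    ((List.range m).map Nat.succ) [x]
  have hstart : appendIfNew (fun k => (w ^ k) x) [] 0 = [x] := by simp [appendIfNew]
  have hcyc : cyc w x = x :: T := by
    rw [cyc_eq_foldl_appendIfNew, List.range_succ_eq_map, List.foldl_cons, hstart, ← hT]
    rfl
  have hnodup : (cyc w x).Nodup := nodup_foldl_appendIfNew _ _ List.nodup_nil
  exact ⟨T, hcyc, (List.nodup_cons.1 (hcyc ▸ hnodup)).1⟩

lemma mem_foataWord {n : ℕ} (w : Perm (Fin n)) (y : Fin n) : y ∈ foataWord w := by
  obtain ⟨x, hx, hmax⟩ :=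
    (Finset.univ.filter (w.SameCycle y)).exists_max_image id
      ⟨y, Finset.mem_filter.2 ⟨Finset.mem_univ y, .refl w y⟩⟩
  rw [Finset.mem_filter] at hx
  simp only [foataWord, List.mem_flatMap, List.mem_filter, mem_cyc_iff_sameCycle,
    decide_eq_true_eq]
  exact ⟨x, ⟨List.mem_finRange x, fun z hz => hmax z (by simpa using hx.2.trans hz)⟩,
    hx.2.symm⟩

variable {m : ℕ}

lemma foataWord_eq_append_cyc_last (u : Perm (Fin (m + 1))) :
    ∃ A, foataWord u = A ++ cyc u (Fin.last m) ∧
      ∀ y, y ∈ A ↔ ¬ u.SameCycle (Fin.last m) y := by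
  set A := ((List.finRange m).map Fin.castSucc).filter
    (fun x => decide (∀ y ∈ cyc u x, y ≤ x)) |>.flatMap (cyc u)
  have hword : foataWord u = A ++ cyc u (Fin.last m) := by
    simp [foataWord, A, List.finRange_succ_last, List.filter_append, Fin.le_last]
  refine ⟨A, hword, fun y => ⟨?_, fun hy => ?_⟩⟩
  · simp only [A, List.mem_flatMap, List.mem_filter, List.mem_map, decide_eq_true_eq,
      mem_cyc_iff_sameCycle]
    rintro ⟨_, ⟨⟨j, -, rfl⟩, hmax⟩, hjy⟩ hy
    exact (Fin.castSucc_lt_last j).not_ge (hmax _ (hjy.trans hy.symm))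
  · have := mem_foataWord u y
    rw [hword, List.mem_append, mem_cyc_iff_sameCycle] at this
    exact this.resolve_right hy

/-- The letters after `Fin.last m` in a Foata word are its cycle-mates; reversal swaps them
with the letters before it, and `u'⁻¹` has the same cycles as `u'`. -/
lemma sameCycle_last_iff_not_of_foataWord_inv_eq_reverse {u u' : Perm (Fin (m + 1))}
    (h : foataWord u'⁻¹ = (foataWord u).reverse) {i : Fin (m + 1)} (hi : i ≠ Fin.last m) :
    u'.SameCycle i (Fin.last m) ↔ ¬ u.SameCycle i (Fin.last m) := by
  obtain ⟨A, hw, hA⟩ := foataWord_eq_append_cyc_last u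
  obtain ⟨A', hw', -⟩ := foataWord_eq_append_cyc_last u'⁻¹
  obtain ⟨T, hT, hlastT⟩ := cyc_eq_cons u (Fin.last m)
  obtain ⟨T', hT', -⟩ := cyc_eq_cons u'⁻¹ (Fin.last m)
  have hlastA : Fin.last m ∉ A := fun hA' => (hA _).1 hA' (Perm.SameCycle.refl _ _)
  have hsplit : T.reverse ++ Fin.last m :: A.reverse = A' ++ Fin.last m :: T' := by
    rw [← hT', ← hw', h, hw, hT]
    simp
  have hT'A : T' = A.reverse :=
    ((List.append_cons_inj_of_notMem (by simpa using hlastT) (by simpa using hlastA)).1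
      hsplit).2.2.symm
  calc u'.SameCycle i (Fin.last m) ↔ i ∈ Fin.last m :: T' := by
        rw [← hT', mem_cyc_iff_sameCycle, Perm.sameCycle_inv, Perm.sameCycle_comm]
    _ ↔ i ∈ A := by simp [hT'A, hi]
    _ ↔ ¬ u.SameCycle i (Fin.last m) := by rw [hA, Perm.sameCycle_comm]

end FoataWord

section Alternating

open Function

variable {α : Type*} {f : α → α} {P : α → Prop}

lemma apply_iterate_iff_iff_even (hP : ∀ x, P (f x) ↔ ¬ P x) (x : α) (k : ℕ) :
    (P (f^[k] x) ↔ P x) ↔ Even k := by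
  induction k with
  | zero => simp
  | succ k ih =>
    rw [iterate_succ_apply', hP, Nat.even_add_one, ← ih]
    tauto

lemma even_minimalPeriod_of_apply_iff_not (hP : ∀ x, P (f x) ↔ ¬ P x) (x : α) :
    Even (minimalPeriod f x) :=
  (apply_iterate_iff_iff_even hP x _).1 (by rw [iterate_minimalPeriod])

lemma sum_range_add_self_ite_iterate {R : Type*} [AddCommMonoidWithOne R] [DecidablePred P]
    (hP : ∀ x, P (f x) ↔ ¬ P x) (x : α) (m : ℕ) :
    ∑ k ∈ Finset.range (m + m), (if P (f^[k] x) then (1 : R) else 0) = m := by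
  induction m with
  | zero => simp
  | succ m ih =>
    rw [show m + 1 + (m + 1) = m + m + 1 + 1 by omega, Finset.sum_range_succ,
      Finset.sum_range_succ, ih, iterate_succ_apply']
    by_cases h : P (f^[m + m] x) <;> simp [h, hP]

lemma sum_minimalPeriod_ite_iterate_eq_half {K : Type*} [DivisionRing K] [CharZero K]
    [DecidablePred P] (hP : ∀ x, P (f x) ↔ ¬ P x) (x : α) :
    ∑ k ∈ Finset.range (minimalPeriod f x), (if P (f^[k] x) then (1 : K) else 0) =
      (minimalPeriod f x : K) / 2 := by
  obtain ⟨m, hm⟩ := even_minimalPeriod_of_apply_iff_not hP x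
  rw [hm, sum_range_add_self_ite_iterate hP, Nat.cast_add, add_self_div_two]

end Alternating

/-- For fixed `i ∈ [n−1]` (with `n ≥ 2`), the indicator
statistic of whether `i` and `n` lie in the same cycle of `w` is
`(1/2)`-mesic for the action of `φ̄ = I ∘ F⁻¹ ∘ R ∘ F` on `S_n`. -/
theorem sameCycle_half_mesic_phiBar (n : ℕ)
    (i : Fin n) (hi : (i : ℕ) < n - 1)
    (φ : Equiv.Perm (Fin n) → Equiv.Perm (Fin n))
    (hφ : ∀ w, IsPhiBar w (φ w)) (w : Equiv.Perm (Fin n)) :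
    ∑ k ∈ Finset.range (Function.minimalPeriod φ w),
        (if (φ^[k] w).SameCycle i ⟨n - 1, by omega⟩ then (1 : ℚ) else 0) =
      (Function.minimalPeriod φ w : ℚ) / 2 := by
  obtain ⟨m, rfl⟩ : ∃ m, n = m + 1 := ⟨n - 1, by omega⟩
  have hlast : (⟨m + 1 - 1, by omega⟩ : Fin (m + 1)) = Fin.last m := Fin.ext (by simp)
  have hne : i ≠ Fin.last m := by
    rintro rfl
    simp at hi
  rw [hlast]
  exact sum_minimalPeriod_ite_iterate_eq_half (K := ℚ)
    (P := fun v => v.SameCycle i (Fin.last m))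
    (fun v => sameCycle_last_iff_not_of_foataWord_inv_eq_reverse (hφ v) hne) w
end

section
/- If w = A n (in one-line notation, with the maximum n in the last position and A nonempty), then the φ-orbit of w has size exactly twice the size of the φ-orbit of A, where φ = F ∘ I ∘ F^{-1} ∘ R. -/
/-- Standardization of a word `L` with distinct entries: replace each entry by
its rank (number of entries of `L` smaller than it), giving the one-line word
of a permutation of `Fin L.length` via the canonical order-isomorphism. -/
def stdz (L : List ℕ) : List ℕ :=
  L.map fun x => (L.filter fun y => decide (y < x)).length

/-!
Write `w = A n`. Reversing gives `n Aʳ`, and a permutation whose Foata word starts with the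
maximum `n` is the single cycle `(n Aʳ)`; its inverse is the cycle `(n A)`, so `φ(A n) = n A`.
Reversing `n A` gives `Aʳ n`, whose Foata preimage fixes `n` and acts as `F⁻¹(Aʳ)` on the
rest, so `φ(n A) = φ(A) n`. Thus `φ²` acts on words ending in `n` exactly as `φ` acts on `A`,
while odd iterates start with `n` and never return to `w`: the orbit of `w` is twice as long.
-/

open Equiv Function

namespace List

theorem foldl_range_appendNew_eq_map_range {α : Type*} [DecidableEq α] (g : ℕ → α) {p : ℕ}
    (hinj : Set.InjOn g (Set.Iio p)) (hrep : ∀ k, p ≤ k → g k ∈ (range p).map g) (k : ℕ) :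
    (range k).foldl (fun acc j => if g j ∈ acc then acc else acc ++ [g j]) [] =
      (range (min k p)).map g := by
  induction k with
  | zero => simp
  | succ k ih =>
    rw [range_succ, foldl_append, ih, foldl_cons, foldl_nil]
    rcases lt_or_ge k p with hk | hk
    · have hnew : g k ∉ (range k).map g := by
        simp only [mem_map, mem_range, not_exists, not_and]
        exact fun j hj hjk => hj.ne (hinj (hj.trans hk) hk hjk)
      rw [min_eq_left hk.le, min_eq_left hk, if_neg hnew, range_succ, map_append,
        map_singleton]
    · rw [min_eq_right hk, min_eq_right (by omega), if_pos (hrep k hk)]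

theorem length_filter_lt_range {k x : ℕ} (hx : x ≤ k) :
    ((range k).filter fun y => decide (y < x)).length = x := by
  obtain ⟨d, rfl⟩ := Nat.exists_eq_add_of_le hx
  rw [range_add, filter_append, filter_eq_self.2 (by simp),
    filter_eq_nil_iff.2 (by simp)]
  simp

variable {α : Type*} [LinearOrder α]

theorem takeWhile_lt_append_flatMap {x : α} {t S : List α} {f : α → List α}
    (ht : ∀ y ∈ t, y < x) (hS : ∀ z ∈ S, x < z) (hf : ∀ z ∈ S, ∃ s, f z = z :: s) :
    (t ++ S.flatMap f).takeWhile (fun y => decide (y < x)) = t := by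
  rw [takeWhile_append_of_pos (by simpa using ht)]
  cases S with
  | nil => simp
  | cons z S =>
    obtain ⟨s, hs⟩ := hf z mem_cons_self
    have hzx : ¬ z < x := (hS z mem_cons_self).not_gt
    simp [hs, hzx]

/-- A concatenation of blocks, each headed by its maximum, with increasing heads, determines
its blocks: each block is the head followed by the run of smaller entries after it. -/
theorem flatMap_eq_flatMap_of_maxHeaded {S T : List α} {f g : α → List α}
    (hS : S.Pairwise (· < ·)) (hT : T.Pairwise (· < ·))
    (hf : ∀ x ∈ S, ∃ t, f x = x :: t ∧ ∀ y ∈ t, y < x)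
    (hg : ∀ x ∈ T, ∃ t, g x = x :: t ∧ ∀ y ∈ t, y < x)
    (h : S.flatMap f = T.flatMap g) : S = T ∧ ∀ x ∈ S, f x = g x := by
  induction S generalizing T with
  | nil =>
    cases T with
    | nil => simp
    | cons y T =>
      obtain ⟨t, ht, -⟩ := hg y mem_cons_self
      simp [ht] at h
  | cons x S ih =>
    cases T with
    | nil =>
      obtain ⟨t, ht, -⟩ := hf x mem_cons_self
      simp [ht] at h
    | cons y T =>
      obtain ⟨s, hs, hsx⟩ := hf x mem_cons_self
      obtain ⟨t, ht, hty⟩ := hg y mem_cons_self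
      rw [flatMap_cons, flatMap_cons, hs, ht, cons_append, cons_append, cons.injEq] at h
      obtain ⟨rfl, h⟩ := h
      have hst : s = t := by
        rw [← takeWhile_lt_append_flatMap hsx (pairwise_cons.1 hS).1
            (fun z hz => (hf z (mem_cons_of_mem x hz)).imp fun _ => And.left),
          ← takeWhile_lt_append_flatMap hty (pairwise_cons.1 hT).1
            (fun z hz => (hg z (mem_cons_of_mem x hz)).imp fun _ => And.left), h]
      subst hst
      obtain ⟨rfl, hfg⟩ := ih (pairwise_cons.1 hS).2 (pairwise_cons.1 hT).2
        (fun z hz => hf z (mem_cons_of_mem x hz)) (fun z hz => hg z (mem_cons_of_mem x hz))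
        (append_cancel_left h)
      refine ⟨rfl, forall_mem_cons.2 ⟨hs.trans ht.symm, hfg⟩⟩

end List

namespace Equiv.Perm

variable {α : Type*} (σ : Perm α) (x : α)

theorem pow_mod_minimalPeriod_apply (k : ℕ) : (σ ^ (k % minimalPeriod σ x)) x = (σ ^ k) x :=
  MulAction.pow_mod_period_smul (m := σ) (a := x) k

theorem pow_minimalPeriod_apply : (σ ^ minimalPeriod σ x) x = x := by
  simpa using (σ.pow_mod_minimalPeriod_apply x (minimalPeriod σ x)).symm

theorem minimalPeriod_inv : minimalPeriod ⇑σ⁻¹ x = minimalPeriod σ x :=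
  MulAction.period_inv σ x

theorem injOn_pow_apply_Iio_minimalPeriod :
    Set.InjOn (fun j => (σ ^ j) x) (Set.Iio (minimalPeriod σ x)) := by
  simpa [← iterate_eq_pow] using iterate_injOn_Iio_minimalPeriod (f := σ) (x := x)

theorem minimalPeriod_pos [Finite α] : 0 < minimalPeriod σ x :=
  MulAction.period_pos_of_orderOf_pos (orderOf_pos σ) x

end Equiv.Perm

theorem Function.Semiconj.minimalPeriod_eq {α β : Type*} {e : α → β} {fa : α → α} {fb : β → β}
    (h : Semiconj e fa fb) (he : Injective e) (x : α) :
    minimalPeriod fb (e x) = minimalPeriod fa x :=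
  minimalPeriod_eq_minimalPeriod_iff.2 fun k => by
    simp only [IsPeriodicPt, IsFixedPt, ← (h.iterate_right k).eq, he.eq_iff]

theorem Function.minimalPeriod_eq_two_mul_of_semiconj {α β : Type*} {f : α → α} {g : β → β}
    {e : β → α} (he : Injective e) (h : Semiconj e g f^[2]) (hodd : ∀ b b', f (e b) ≠ e b')
    (b : β) : minimalPeriod f (e b) = 2 * minimalPeriod g b := by
  have hhalf := h.minimalPeriod_eq he b
  obtain ⟨k, hk⟩ : Even (minimalPeriod f (e b)) := by
    by_contra hne
    obtain ⟨k, hk⟩ := Nat.not_even_iff_odd.1 hne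
    apply hodd (g^[k] b) b
    rw [(h.iterate_right k).eq, ← iterate_mul, ← iterate_succ_apply' f, Nat.succ_eq_add_one,
      ← hk, iterate_minimalPeriod]
  rw [minimalPeriod_iterate_eq_div_gcd two_ne_zero, hk, Nat.gcd_eq_right ⟨k, by ring⟩] at hhalf
  omega

section Cycles

variable {n : ℕ} (w : Perm (Fin n)) (x : Fin n)

theorem cyc_eq_map_range :
    cyc w x = (List.range (minimalPeriod w x)).map fun j => (w ^ j) x := by
  have hle : minimalPeriod w x ≤ n := by
    simpa using minimalPeriod_le_card (f := w) (x := x)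
  rw [cyc, List.foldl_range_appendNew_eq_map_range (fun j => (w ^ j) x), min_eq_right hle]
  · exact w.injOn_pow_apply_Iio_minimalPeriod x
  · intro k _
    exact List.mem_map.2 ⟨k % minimalPeriod w x,
      List.mem_range.2 (Nat.mod_lt _ (w.minimalPeriod_pos x)), w.pow_mod_minimalPeriod_apply x k⟩

theorem length_cyc : (cyc w x).length = minimalPeriod w x := by
  simp [cyc_eq_map_range]

theorem getElem_cyc (j : ℕ) (h : j < (cyc w x).length) : (cyc w x)[j] = (w ^ j) x := by
  simp [cyc_eq_map_range]

theorem nodup_cyc : (cyc w x).Nodup := by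
  rw [cyc_eq_map_range]
  exact List.nodup_range.map_on fun i hi j hj =>
    w.injOn_pow_apply_Iio_minimalPeriod x (List.mem_range.1 hi) (List.mem_range.1 hj)

theorem cyc_eq_cons_tail : cyc w x = x :: (cyc w x).tail := by
  obtain ⟨p, hp⟩ := Nat.exists_eq_add_one_of_ne_zero (w.minimalPeriod_pos x).ne'
  rw [cyc_eq_map_range, hp, List.range_succ_eq_map]
  simp

variable {w x} in
theorem mem_cyc_iff {y : Fin n} : y ∈ cyc w x ↔ w.SameCycle x y := by
  rw [cyc_eq_map_range, List.mem_map]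
  constructor
  · rintro ⟨j, -, rfl⟩
    exact ⟨j, by simp⟩
  · intro h
    obtain ⟨j, -, -, hj⟩ := h.exists_pow_eq w
    exact ⟨j % minimalPeriod w x, List.mem_range.2 (Nat.mod_lt _ (w.minimalPeriod_pos x)),
      (w.pow_mod_minimalPeriod_apply x j).trans hj⟩

theorem self_mem_cyc : x ∈ cyc w x := mem_cyc_iff.2 (Perm.SameCycle.refl w x)

variable {w x} in
theorem formPerm_cyc_apply {z : Fin n} (hz : z ∈ cyc w x) : (cyc w x).formPerm z = w z := by
  obtain ⟨j, hj, rfl⟩ := List.getElem_of_mem hz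
  rw [List.formPerm_apply_getElem _ (nodup_cyc w x), getElem_cyc, getElem_cyc, length_cyc,
    Perm.pow_mod_minimalPeriod_apply, pow_succ', Perm.mul_apply]

theorem cyc_inv : cyc w⁻¹ x = x :: (cyc w x).tail.reverse := by
  set p := minimalPeriod w x
  have hlen : (cyc w⁻¹ x).length = p := by rw [length_cyc, Perm.minimalPeriod_inv]
  apply List.ext_getElem
  · have := w.minimalPeriod_pos x
    simp only [hlen, List.length_cons, List.length_reverse, List.length_tail, length_cyc, p]
    omega
  · intro j h₁ h₂
    rw [getElem_cyc]
    rcases j with _ | j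
    · simp
    · have hj : j + 1 < p := hlen ▸ h₁
      rw [List.getElem_cons_succ, List.getElem_reverse, List.getElem_tail, getElem_cyc,
        inv_pow, Perm.inv_eq_iff_eq, ← Perm.mul_apply, ← pow_add, List.length_tail, length_cyc,
        show j + 1 + (p - 1 - 1 - j + 1) = p by omega, Perm.pow_minimalPeriod_apply]

end Cycles

section CycleMaxima

variable {n : ℕ} (w : Perm (Fin n))

def cycleMaxima : List (Fin n) :=
  (List.finRange n).filter fun x => decide (∀ y ∈ cyc w x, y ≤ x)

theorem foataWord_eq_flatMap : foataWord w = (cycleMaxima w).flatMap (cyc w) := rfl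

variable {w} in
theorem mem_cycleMaxima {x : Fin n} : x ∈ cycleMaxima w ↔ ∀ y ∈ cyc w x, y ≤ x := by
  simp [cycleMaxima]

theorem pairwise_lt_cycleMaxima : (cycleMaxima w).Pairwise (· < ·) :=
  (List.pairwise_lt_finRange n).filter _

variable {w} in
theorem cyc_eq_cons_of_mem_cycleMaxima {x : Fin n} (hx : x ∈ cycleMaxima w) :
    ∃ t, cyc w x = x :: t ∧ ∀ y ∈ t, y < x := by
  refine ⟨_, cyc_eq_cons_tail w x, fun y hy => (mem_cycleMaxima.1 hx y ?_).lt_of_ne ?_⟩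
  · exact List.mem_of_mem_tail hy
  · rintro rfl
    have hnd := nodup_cyc w y
    rw [cyc_eq_cons_tail] at hnd
    exact (List.nodup_cons.1 hnd).1 hy

theorem exists_mem_cycleMaxima_mem_cyc (z : Fin n) : ∃ x ∈ cycleMaxima w, z ∈ cyc w x := by
  obtain ⟨x, hx, hmax⟩ := (cyc w z).toFinset.exists_max_image id ⟨z, by simp [self_mem_cyc]⟩
  have hzx : w.SameCycle z x := mem_cyc_iff.1 (List.mem_toFinset.1 hx)
  refine ⟨x, mem_cycleMaxima.2 fun y hy => hmax y ?_, mem_cyc_iff.2 hzx.symm⟩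
  exact List.mem_toFinset.2 (mem_cyc_iff.2 (hzx.trans (mem_cyc_iff.1 hy)))

theorem cycleMaxima_inv : cycleMaxima w⁻¹ = cycleMaxima w := by
  refine List.filter_congr fun x _ => ?_
  simp only [mem_cyc_iff, Perm.sameCycle_inv]

theorem foataWord_inv :
    foataWord w⁻¹ = (cycleMaxima w).flatMap fun x => x :: (cyc w x).tail.reverse := by
  rw [foataWord_eq_flatMap, cycleMaxima_inv, funext (cyc_inv w)]

theorem foataWord_injective : Injective (foataWord (n := n)) := by
  intro u v h
  obtain ⟨-, hcyc⟩ := List.flatMap_eq_flatMap_of_maxHeaded (pairwise_lt_cycleMaxima u)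
    (pairwise_lt_cycleMaxima v) (fun _ => cyc_eq_cons_of_mem_cycleMaxima)
    (fun _ => cyc_eq_cons_of_mem_cycleMaxima) h
  ext z : 1
  obtain ⟨x, hx, hz⟩ := exists_mem_cycleMaxima_mem_cyc u z
  rw [← formPerm_cyc_apply hz, hcyc x hx, formPerm_cyc_apply (hcyc x hx ▸ hz)]

end CycleMaxima

section ExtendLast

variable {m : ℕ}

def extendLast (r : Perm (Fin m)) : Perm (Fin (m + 1)) :=
  finSuccEquivLast.symm.permCongr r.optionCongr

@[simp]
theorem extendLast_castSucc (r : Perm (Fin m)) (y : Fin m) :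
    extendLast r y.castSucc = (r y).castSucc := by
  simp [extendLast, finSuccEquivLast_castSucc, finSuccEquivLast_symm_some]

@[simp]
theorem extendLast_last (r : Perm (Fin m)) : extendLast r (Fin.last m) = Fin.last m := by
  simp [extendLast, finSuccEquivLast_last]

theorem extendLast_injective : Injective (extendLast (m := m)) := fun r s h =>
  Equiv.ext fun y => by simpa using DFunLike.congr_fun h y.castSucc

theorem extendLast_inv (r : Perm (Fin m)) : (extendLast r)⁻¹ = extendLast r⁻¹ := by
  ext x : 1
  cases x using Fin.lastCases <;> simp [Perm.inv_def, Equiv.symm_apply_eq]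

theorem semiconj_castSucc_extendLast (r : Perm (Fin m)) :
    Semiconj Fin.castSucc r (extendLast r) :=
  fun y => (extendLast_castSucc r y).symm

theorem cyc_extendLast_castSucc (r : Perm (Fin m)) (y : Fin m) :
    cyc (extendLast r) y.castSucc = (cyc r y).map Fin.castSucc := by
  have h := semiconj_castSucc_extendLast r
  rw [cyc_eq_map_range, cyc_eq_map_range, h.minimalPeriod_eq (Fin.castSucc_injective m),
    List.map_map]
  refine List.map_congr_left fun j _ => ?_
  simp only [comp_apply, ← Perm.iterate_eq_pow, (h.iterate_right j).eq]

theorem cyc_extendLast_last (r : Perm (Fin m)) :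
    cyc (extendLast r) (Fin.last m) = [Fin.last m] := by
  rw [cyc_eq_map_range, minimalPeriod_eq_one_iff_isFixedPt.2 (extendLast_last r)]
  simp

theorem cycleMaxima_extendLast (r : Perm (Fin m)) :
    cycleMaxima (extendLast r) = (cycleMaxima r).map Fin.castSucc ++ [Fin.last m] := by
  rw [cycleMaxima, List.finRange_succ_last, List.filter_append, List.filter_map]
  congr 1
  · congr 1
    refine List.filter_congr fun y _ => ?_
    simp [cyc_extendLast_castSucc]
  · simp [cyc_extendLast_last, Fin.le_last]

theorem foataWord_extendLast (r : Perm (Fin m)) :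
    foataWord (extendLast r) = (foataWord r).map Fin.castSucc ++ [Fin.last m] := by
  simp [foataWord_eq_flatMap, cycleMaxima_extendLast, List.flatMap_append, List.map_flatMap,
    List.flatMap_map, cyc_extendLast_castSucc, cyc_extendLast_last]

theorem oneLineF_extendLast (r : Perm (Fin m)) :
    oneLineF (extendLast r) = (oneLineF r).map Fin.castSucc ++ [Fin.last m] := by
  simp [oneLineF, List.finRange_succ_last]

theorem oneLineN_extendLast (r : Perm (Fin m)) :
    oneLineN (extendLast r) = oneLineN r ++ [m] := by
  simp [oneLineN, List.finRange_succ_last]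

end ExtendLast

theorem oneLineF_injective {n : ℕ} : Injective (oneLineF (n := n)) := fun _ _ h =>
  Equiv.ext fun i => List.map_inj_left.1 h i (List.mem_finRange i)

theorem oneLineN_injective {n : ℕ} : Injective (oneLineN (n := n)) := fun _ _ h =>
  Equiv.ext fun i => Fin.ext (List.map_inj_left.1 h i (List.mem_finRange i))

section Phi

variable {m : ℕ}

theorem apply_zero_of_oneLineF_eq_cons {V : Perm (Fin (m + 1))} {a : Fin (m + 1)}
    {L : List (Fin (m + 1))} (h : oneLineF V = a :: L) : V 0 = a := by
  simp only [oneLineF, List.finRange_succ, List.map_cons, List.cons.injEq] at h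
  exact h.1

theorem cycleMaxima_eq_singleton_last {u : Perm (Fin (m + 1))} {L : List (Fin (m + 1))}
    (h : foataWord u = Fin.last m :: L) : cycleMaxima u = [Fin.last m] := by
  have hlast : Fin.last m ∈ cycleMaxima u := mem_cycleMaxima.2 fun y _ => Fin.le_last y
  rcases hcm : cycleMaxima u with _ | ⟨x, T⟩
  · simp [hcm] at hlast
  · obtain ⟨t, ht, -⟩ := cyc_eq_cons_of_mem_cycleMaxima (hcm ▸ List.mem_cons_self)
    rw [foataWord_eq_flatMap, hcm, List.flatMap_cons, ht, List.cons_append,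
      List.cons.injEq] at h
    obtain rfl := h.1
    have hT := hcm ▸ pairwise_lt_cycleMaxima u
    cases T with
    | nil => rfl
    | cons y T =>
      exact absurd ((List.pairwise_cons.1 hT).1 y List.mem_cons_self) (Fin.le_last y).not_gt

theorem foataWord_inv_of_eq_last_cons {u : Perm (Fin (m + 1))} {L : List (Fin (m + 1))}
    (h : foataWord u = Fin.last m :: L) : foataWord u⁻¹ = Fin.last m :: L.reverse := by
  have hcm := cycleMaxima_eq_singleton_last h
  rw [foataWord_eq_flatMap, hcm, List.flatMap_singleton, cyc_eq_cons_tail] at h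
  rw [foataWord_inv, hcm, List.flatMap_singleton, (List.cons.inj h).2]

theorem IsPhi.oneLineF_eq_last_cons {V V' : Perm (Fin (m + 1))} {L : List (Fin (m + 1))}
    (h : IsPhi V V') (hV : oneLineF V = L ++ [Fin.last m]) : oneLineF V' = Fin.last m :: L := by
  obtain ⟨U, hU, hV'⟩ := h
  rw [hV, List.reverse_append, List.reverse_singleton, List.singleton_append] at hU
  rw [hV', foataWord_inv_of_eq_last_cons hU, List.reverse_reverse]

theorem IsPhi.eq_extendLast {V V' : Perm (Fin (m + 1))} {v v' : Perm (Fin m)}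
    (h : IsPhi V V') (hv : IsPhi v v')
    (hV : oneLineF V = Fin.last m :: (oneLineF v).map Fin.castSucc) : V' = extendLast v' := by
  obtain ⟨U, hU, hV'⟩ := h
  obtain ⟨s, hs, hv'⟩ := hv
  have hUs : U = extendLast s := foataWord_injective <| by
    rw [hU, hV, foataWord_extendLast, hs]
    simp [List.map_reverse]
  apply oneLineF_injective
  rw [hV', hUs, extendLast_inv, foataWord_extendLast, ← hv', oneLineF_extendLast]

end Phi

section Orbit

variable {m : ℕ} {φ : Perm (Fin (m + 1)) → Perm (Fin (m + 1))}

theorem phi_phi_extendLast {ψ : Perm (Fin m) → Perm (Fin m)} (hφ : ∀ v, IsPhi v (φ v))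
    (hψ : ∀ v, IsPhi v (ψ v)) (v : Perm (Fin m)) : φ (φ (extendLast v)) = extendLast (ψ v) :=
  (hφ _).eq_extendLast (hψ v) ((hφ _).oneLineF_eq_last_cons (oneLineF_extendLast v))

theorem phi_extendLast_ne_extendLast [NeZero m] (hφ : ∀ v, IsPhi v (φ v))
    (v u : Perm (Fin m)) : φ (extendLast v) ≠ extendLast u := fun h => by
  have h0 :=
    apply_zero_of_oneLineF_eq_cons ((hφ _).oneLineF_eq_last_cons (oneLineF_extendLast v))
  rw [h, ← Fin.castSucc_zero, extendLast_castSucc] at h0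
  exact Fin.castSucc_ne_last _ h0

end Orbit

theorem oneLineN_perm_range {n : ℕ} (w : Perm (Fin n)) : (oneLineN w).Perm (List.range n) := by
  simpa [oneLineN, List.map_map, comp_def, List.map_coe_finRange_eq_range] using
    w.map_finRange_perm.map Fin.val

theorem stdz_eq_self_of_perm_range {L : List ℕ} (h : L.Perm (List.range L.length)) :
    stdz L = L := by
  refine (List.map_congr_left fun x hx => ?_).trans L.map_id
  rw [← List.countP_eq_length_filter, h.countP_eq, List.countP_eq_length_filter,
    List.length_filter_lt_range (List.mem_range.1 (h.subset hx)).le, id]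

/-- If `w = A n` in one-line notation (the maximum last, `A`
nonempty), then the `φ`-orbit of `w` has size exactly twice the size of the
`φ`-orbit of `A` (viewed, via the canonical order-isomorphism, as the orbit of
the standardization of `A` under `φ` acting on `S_{|A|}`), where
`φ = F ∘ I ∘ F⁻¹ ∘ R`. -/
theorem phi_orbit_double (n : ℕ) (w : Equiv.Perm (Fin n)) (A : List ℕ)
    (hA : A ≠ []) (hw : oneLineN w = A ++ [n - 1])
    (φ : Equiv.Perm (Fin n) → Equiv.Perm (Fin n))
    (hφ : ∀ v, IsPhi v (φ v))
    (ψ : Equiv.Perm (Fin A.length) → Equiv.Perm (Fin A.length))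
    (hψ : ∀ v, IsPhi v (ψ v))
    (u : Equiv.Perm (Fin A.length)) (hu : oneLineN u = stdz A) :
    Function.minimalPeriod φ w = 2 * Function.minimalPeriod ψ u := by
  obtain rfl : n = A.length + 1 := by simpa [oneLineN] using congrArg List.length hw
  have : NeZero A.length := ⟨by simpa using hA⟩
  have hArange : A.Perm (List.range A.length) := by
    have h := oneLineN_perm_range w
    rwa [hw, Nat.add_sub_cancel, List.range_succ, List.perm_append_right_iff] at h
  obtain rfl : w = extendLast u := oneLineN_injective <| by
    rw [hw, oneLineN_extendLast, hu, stdz_eq_self_of_perm_range hArange, Nat.add_sub_cancel]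
  exact minimalPeriod_eq_two_mul_of_semiconj extendLast_injective
    (fun v => (phi_phi_extendLast hφ hψ v).symm) (phi_extendLast_ne_extendLast hφ) u
end
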